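/- Let q be a conjunctive query over a schema R, D a database for R, and Σ a set of TGDs over R in normal form. Then ans(q_Σ,D,Σ) ⊆ q_Σ(D); equivalently, q_Σ(chase(D,Σ)) ⊆ q_Σ(D), where for a set of CQs Q we put Q(I) = ∪_{q′∈Q} q′(I). -/

import Mathlib

namespace OntDB

/-- Terms: constants, labeled nulls, and variables (each indexed by naturals). -/
inductive Term : Type
  | const : ℕ → Term
  | null  : ℕ → Term
  | var   : ℕ → Term
deriving DecidableEq

/-- a term is not a labeled null -/
def Term.noNull : Term → Prop
  | .null _ => False
  | _ => True

/-- Atoms: a predicate symbol applied to a list of argument terms. -/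
structure Atom : Type where
  pred : ℕ
  args : List Term
deriving DecidableEq

/-- A relational schema: a finite set of predicate symbols, each with an arity. -/
structure Schema : Type where
  preds : Finset ℕ
  ar : ℕ → ℕ

/-- arity(R) : the maximum arity over the predicates of R -/
def Schema.maxArity (R : Schema) : ℕ := R.preds.sup R.ar

def Atom.overSchema (R : Schema) (a : Atom) : Prop :=
  a.pred ∈ R.preds ∧ a.args.length = R.ar a.pred

/-- applying a substitution to an atom -/
def Atom.subst (h : Term → Term) (a : Atom) : Atom := ⟨a.pred, a.args.map h⟩

/-- a substitution fixes every constant -/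
def constFix (h : Term → Term) : Prop := ∀ c, h (Term.const c) = Term.const c

/-- A homomorphism from the set of atoms `A` to the set of atoms `A'`. -/
def IsHom (h : Term → Term) (A A' : Set Atom) : Prop :=
  constFix h ∧ ∀ a ∈ A, a.subst h ∈ A'

/-- the variables occurring in an atom -/
def Atom.vars (a : Atom) : Finset ℕ :=
  (a.args.filterMap (fun t => match t with | .var v => some v | _ => none)).toFinset

/-- the number of occurrences of the variable `v` in the atom `a` -/
def Atom.countVar (a : Atom) (v : ℕ) : ℕ := a.args.count (Term.var v)

/-- the variables occurring in a finite set of atoms -/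
def varsOfSet (S : Finset Atom) : Finset ℕ := S.sup Atom.vars

/-- A conjunctive query: a head atom together with a finite set of body atoms. -/
structure CQ : Type where
  head : Atom
  body : Finset Atom
deriving DecidableEq

/-- the variables occurring in a CQ (head and body) -/
def CQ.vars (q : CQ) : Finset ℕ := q.head.vars ∪ varsOfSet q.body

/-- the number of occurrences of the variable `v` in the CQ `q` (head and body) -/
def CQ.countVar (q : CQ) (v : ℕ) : ℕ := q.head.countVar v + ∑ a ∈ q.body, a.countVar v

/-- a variable is shared in `q` if it occurs more than once in `q` -/
def CQ.shared (q : CQ) (v : ℕ) : Prop := 2 ≤ q.countVar v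

/-- a CQ over a schema: body atoms over the schema, and no labeled nulls occur -/
def CQ.overSchema (R : Schema) (q : CQ) : Prop :=
  (∀ a ∈ q.body, a.overSchema R ∧ ∀ t ∈ a.args, t.noNull) ∧ ∀ t ∈ q.head.args, t.noNull

/-- a tuple of constants -/
def isConstTuple (t : List Term) : Prop := ∀ s ∈ t, ∃ c, s = Term.const c

/-- Evaluation of a CQ over an instance: the tuples of constants obtained as images
of the distinguished terms under homomorphisms of the body into the instance. -/
def CQ.eval (q : CQ) (I : Set Atom) : Set (List Term) :=
  { t | isConstTuple t ∧ ∃ h : Term → Term, IsHom h ↑q.body I ∧ q.head.args.map h = t }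

/-- evaluation of a (possibly infinite) union of CQs -/
def ucqEval (Q : Set CQ) (I : Set Atom) : Set (List Term) := ⋃ q ∈ Q, q.eval I

/-- A TGD (in normal form representation): a finite set of body atoms plus a single
head atom; the existentially quantified variables are exactly the head variables
that do not occur in the body. -/
structure TGD : Type where
  body : Finset Atom
  head : Atom
deriving DecidableEq

/-- the universally quantified variables occurring in the head -/
def TGD.frontier (σ : TGD) : Finset ℕ := varsOfSet σ.body ∩ σ.head.vars

/-- the existentially quantified variables -/
def TGD.exVars (σ : TGD) : Finset ℕ := σ.head.vars \ varsOfSet σ.body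

def TGD.vars (σ : TGD) : Finset ℕ := varsOfSet σ.body ∪ σ.head.vars

/-- normal form: at most one existentially quantified variable, occurring once -/
def TGD.NormalForm (σ : TGD) : Prop :=
  σ.exVars.card ≤ 1 ∧ ∀ v ∈ σ.exVars, σ.head.countVar v = 1

/-- a TGD is linear if its body consists of a single atom -/
def TGD.Linear (σ : TGD) : Prop := σ.body.card = 1

/-- a set of TGDs is linear if all its members are -/
def LinearSet (Sig : Finset TGD) : Prop := ∀ σ ∈ Sig, σ.Linear

def TGD.overSchema (R : Schema) (σ : TGD) : Prop :=
  σ.body.Nonempty ∧ (∀ a ∈ σ.body, a.overSchema R ∧ ∀ t ∈ a.args, t.noNull) ∧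
  σ.head.overSchema R ∧ ∀ t ∈ σ.head.args, t.noNull

/-- satisfaction of a TGD by an instance -/
def TGD.sat (σ : TGD) (I : Set Atom) : Prop :=
  ∀ h : Term → Term, IsHom h ↑σ.body I →
    ∃ h' : Term → Term, constFix h' ∧
      (∀ v ∈ σ.frontier, h' (Term.var v) = h (Term.var v)) ∧ σ.head.subst h' ∈ I

/-- satisfaction of a set of TGDs -/
def satSet (Sig : Finset TGD) (I : Set Atom) : Prop := ∀ σ ∈ Sig, σ.sat I

/-- a database for a schema: a finite set of atoms over the schema whose
arguments are constants -/
def IsDatabase (R : Schema) (D : Finset Atom) : Prop :=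
  ∀ a ∈ D, a.overSchema R ∧ ∀ t ∈ a.args, ∃ c, t = Term.const c

/-- the certain answers of a CQ w.r.t. a database and a set of TGDs -/
def certAns (q : CQ) (D : Finset Atom) (Sig : Finset TGD) : Set (List Term) :=
  { t | ∀ I : Set Atom, ↑D ⊆ I → satSet Sig I → t ∈ q.eval I }

/-- the certain answers of a (possibly infinite) union of CQs -/
def certAnsUCQ (Q : Set CQ) (D : Finset Atom) (Sig : Finset TGD) : Set (List Term) :=
  { t | ∀ I : Set Atom, ↑D ⊆ I → satSet Sig I → t ∈ ucqEval Q I }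

/-- a unifier for a finite set of atoms -/
def IsUnifier (γ : Term → Term) (S : Finset Atom) : Prop :=
  constFix γ ∧ ∀ a ∈ S, ∀ b ∈ S, a.subst γ = b.subst γ

def Unifies (S : Finset Atom) : Prop := ∃ γ, IsUnifier γ S

/-- most general unifier -/
def IsMGU (γ : Term → Term) (S : Finset Atom) : Prop :=
  IsUnifier γ S ∧ ∀ γ', IsUnifier γ' S → ∃ δ : Term → Term, ∀ t, γ' t = δ (γ t)

/-- `i` is the position of the existentially quantified variable in head(σ) -/
def TGD.exPos (σ : TGD) (i : ℕ) : Prop :=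
  ∃ z ∈ σ.exVars, σ.head.args[i]? = some (Term.var z)

/-- applicability of the TGD σ to the set S ⊆ body(q) -/
def Applicable (q : CQ) (σ : TGD) (S : Finset Atom) : Prop :=
  S.Nonempty ∧ S ⊆ q.body ∧ Unifies (S ∪ {σ.head}) ∧
  ∀ a ∈ S, ∀ i, σ.exPos i →
    (∀ c, a.args[i]? ≠ some (Term.const c)) ∧
    ∀ v, a.args[i]? = some (Term.var v) → ¬ q.shared v

/-- factorizability of the set S ⊆ body(q) w.r.t. the TGD σ -/
def Factorizable (q : CQ) (σ : TGD) (S : Finset Atom) : Prop :=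
  S ⊆ q.body ∧ 2 ≤ S.card ∧ Unifies S ∧ (∃ i, σ.exPos i) ∧
  ∃ V : ℕ, V ∉ varsOfSet (q.body \ S) ∧
    ∀ a ∈ S, (∃ i, σ.exPos i ∧ a.args[i]? = some (Term.var V)) ∧
      ∀ j, a.args[j]? = some (Term.var V) → σ.exPos j

/-- renaming of variables -/
def renT (ρ : ℕ → ℕ) : Term → Term
  | .var v => .var (ρ v)
  | t => t

/-- renaming the variables of a TGD -/
def TGD.rename (σ : TGD) (ρ : ℕ → ℕ) : TGD :=
  ⟨σ.body.image (Atom.subst (renT ρ)), σ.head.subst (renT ρ)⟩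

/-- applying a substitution to a CQ -/
def CQ.subst (q : CQ) (γ : Term → Term) : CQ :=
  ⟨q.head.subst γ, q.body.image (Atom.subst γ)⟩

/-- the restriction on MGUs used by XRewrite under sticky sets of TGDs:
every variable of the protected set `W` (the variables of the input query) is
mapped to a variable of `W` (or to a constant).  For `W = ∅` no restriction. -/
def ProtectsVars (W : Finset ℕ) (γ : Term → Term) : Prop :=
  ∀ v ∈ W, (∃ u ∈ W, γ (Term.var v) = Term.var u) ∨ ∃ c, γ (Term.var v) = Term.const c

/-- the substitution is the identity on all variables outside `V` -/
def IdOutside (V : Finset ℕ) (γ : Term → Term) : Prop :=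
  ∀ v, v ∉ V → γ (Term.var v) = Term.var v

/-- one rewriting step of XRewrite (applied to `q`, producing `q'`) -/
def IsRewriteStep (Sig : Finset TGD) (W : Finset ℕ) (q q' : CQ) : Prop :=
  ∃ σ ∈ Sig, ∃ ρ : ℕ → ℕ, Function.Injective ρ ∧ (∀ v, ρ v ∉ q.vars) ∧
    ∃ S : Finset Atom, Applicable q (σ.rename ρ) S ∧
      ∃ γ : Term → Term, IsMGU γ (S ∪ {(σ.rename ρ).head}) ∧
        IdOutside (varsOfSet (S ∪ {(σ.rename ρ).head})) γ ∧ ProtectsVars W γ ∧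
        q' = (CQ.mk q.head ((q.body \ S) ∪ (σ.rename ρ).body)).subst γ

/-- one factorization step of XRewrite -/
def IsFactStep (Sig : Finset TGD) (W : Finset ℕ) (q q' : CQ) : Prop :=
  ∃ σ ∈ Sig, ∃ S : Finset Atom, Factorizable q σ S ∧
    ∃ γ : Term → Term, IsMGU γ S ∧ IdOutside (varsOfSet S) γ ∧ ProtectsVars W γ ∧
      q' = q.subst γ

/-- the CQs obtainable from q by a finite sequence of rewriting and
factorization steps -/
inductive Reach (Sig : Finset TGD) (W : Finset ℕ) (q : CQ) : CQ → Prop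
  | refl : Reach Sig W q q
  | rw {p p' : CQ} : Reach Sig W q p → IsRewriteStep Sig W p p' → Reach Sig W q p'
  | fact {p p' : CQ} : Reach Sig W q p → IsFactStep Sig W p p' → Reach Sig W q p'

/-- the output of XRewrite(q,Σ): q together with all CQs obtainable from q by a
finite sequence of rewriting and factorization steps whose last step is a
rewriting step -/
def XRewriteOut (Sig : Finset TGD) (W : Finset ℕ) (q : CQ) : Set CQ :=
  {q} ∪ { p' | ∃ p : CQ, Reach Sig W q p ∧ IsRewriteStep Sig W p p' }

/-- two CQs are the same up to bijective variable renaming -/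
def CQEquiv (p p' : CQ) : Prop :=
  ∃ ρ : ℕ → ℕ, Function.Bijective ρ ∧ p.subst (renT ρ) = p'

/-- the SMarking procedure: `Marked Sig σ v` says that the body variable `v` of
σ gets marked -/
inductive Marked (Sig : Finset TGD) : TGD → ℕ → Prop
  | init {σ : TGD} {v : ℕ} : σ ∈ Sig → v ∈ varsOfSet σ.body → v ∉ σ.head.vars →
      Marked Sig σ v
  | prop {σ σ' : TGD} {v : ℕ} (b : Atom) (u : ℕ → ℕ) : σ ∈ Sig → σ' ∈ Sig →
      v ∈ varsOfSet σ.body → v ∈ σ.head.vars → b ∈ σ'.body →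
      (∀ i : ℕ, σ.head.args[i]? = some (Term.var v) →
        b.args[i]? = some (Term.var (u i))) →
      (∀ i : ℕ, σ.head.args[i]? = some (Term.var v) → Marked Sig σ' (u i)) →
      Marked Sig σ v

/-- a set of TGDs is sticky if every marked variable occurs only once in the
body of its TGD -/
def Sticky (Sig : Finset TGD) : Prop :=
  ∀ σ ∈ Sig, ∀ v : ℕ, Marked Sig σ v → (∑ a ∈ σ.body, a.countVar v) = 1

/- ## Propagation graph and atom coverage -/

/-- a position of a schema: a predicate together with an argument index -/
abbrev Pos := ℕ × ℕ

/-- the edges of the propagation graph -/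
def PGEdge (σ : TGD) (pb ph : Pos) : Prop :=
  ∃ b ∈ σ.body, ∃ v : ℕ,
    b.pred = pb.1 ∧ b.args[pb.2]? = some (Term.var v) ∧
    σ.head.pred = ph.1 ∧ σ.head.args[ph.2]? = some (Term.var v)

/-- `vs` is a path in the propagation graph of Σ with edge labels `ls` -/
def IsPath (Sig : Finset TGD) (vs : List Pos) (ls : List TGD) : Prop :=
  vs.length = ls.length + 1 ∧
  ∀ j < ls.length, ∃ σ pb ph,
    ls[j]? = some σ ∧ vs[j]? = some pb ∧ vs[j + 1]? = some ph ∧ σ ∈ Sig ∧ PGEdge σ pb ph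

/-- a minimal path: no cycle is traversed twice consecutively -/
def MinimalPath (Sig : Finset TGD) (vs : List Pos) (ls : List TGD) : Prop :=
  IsPath Sig vs ls ∧
  ¬ ∃ i j : ℕ, 0 < i ∧ i + 1 < vs.length ∧ 0 < j ∧ j ≤ i ∧ i + j < vs.length ∧
      (∀ k ≤ j, vs[i - j + k]? = vs[i + k]?) ∧ ∀ k < j, ls[i - j + k]? = ls[i + k]?

/-- a tight sequence of (linear) TGDs -/
def TightSeq (σs : List TGD) : Prop :=
  ∀ j, j + 1 < σs.length →
    ∃ σ1 σ2, σs[j]? = some σ1 ∧ σs[j + 1]? = some σ2 ∧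
      ∃ h : Term → Term, constFix h ∧ σ2.body.image (Atom.subst h) = {σ1.head}

/-- a sequence of TGDs compatible to an atom -/
def CompatibleTo (σs : List TGD) (a : Atom) : Prop :=
  ∃ σ1, σs[0]? = some σ1 ∧ ∃ h : Term → Term, constFix h ∧
    σ1.body.image (Atom.subst h) = {a}

/-- pos(a,t): the positions (indices) at which the term t occurs in the atom a -/
def atomPos (a : Atom) (t : Term) : Set ℕ := { i | a.args[i]? = some t }

/-- T(q,a): the constants of a together with the variables of a shared in q -/
def Tq (q : CQ) (a : Atom) : Set Term :=
  { t | t ∈ a.args ∧ ((∃ c, t = Term.const c) ∨ ∃ v, t = Term.var v ∧ q.shared v) }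

/-- atom coverage: a covers b w.r.t. q and Σ -/
def Covers (Sig : Finset TGD) (q : CQ) (a b : Atom) : Prop :=
  (∀ t ∈ Tq q b, t ∈ a.args) ∧
  ∃ σs : List TGD, σs ≠ [] ∧ (∀ σ ∈ σs, σ ∈ Sig) ∧ TightSeq σs ∧ CompatibleTo σs a ∧
    ∀ t ∈ Tq q b, ∀ i ∈ atomPos b t,
      ∃ vs : List Pos, MinimalPath Sig vs σs ∧
        (∃ p0 : Pos, vs[0]? = some p0 ∧ p0.1 = a.pred ∧ p0.2 ∈ atomPos a t) ∧
        vs[vs.length - 1]? = some (b.pred, i)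


/-!
Evaluate `q_Σ` over an oblivious chase whose nulls are Skolem terms, so that a null determines
the trigger that invented it. Take a match `g` of some `p ∈ q_Σ` in the chase that does not land
in `D`, and an image atom `a` of maximal depth, created by `σ` firing with `h`. Up to the stage of
`a`, its null `z` occurs only in `a`, and there only at the existential position of `σ`. If a
shared variable of `p` is sent to `z`, the atoms containing it are all sent to `a` and form a
factorizable set, and factorizing merges at least two of them. Otherwise `σ` is applicable to the
atoms sent to `a`, and rewriting replaces them by the body of `σ`, whose image lies at smaller
depth. Either way a weighted count of depths drops while the answer is kept, so the process ends
with a member of `q_Σ` that matches `D` itself.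
-/

theorem _root_.List.count_le_one_iff_getElem? {α : Type*} [DecidableEq α] {l : List α} {x : α} :
    l.count x ≤ 1 ↔ ∀ i j : ℕ, l[i]? = some x → l[j]? = some x → i = j := by
  rw [← not_lt, ← Nat.succ_le_iff, ← List.duplicate_iff_two_le_count,
    List.duplicate_iff_exists_distinct_get]
  constructor
  · intro h i j hi hj
    by_contra hij
    obtain ⟨hi', rfl⟩ := List.getElem?_eq_some_iff.1 hi
    obtain ⟨hj', hj⟩ := List.getElem?_eq_some_iff.1 hj
    rcases Nat.lt_or_gt_of_ne hij with hlt | hlt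
    · exact h ⟨⟨i, hi'⟩, ⟨j, hj'⟩, hlt, rfl, hj.symm⟩
    · exact h ⟨⟨j, hj'⟩, ⟨i, hi'⟩, hlt, hj.symm, rfl⟩
  · rintro h ⟨n, m, hnm, hn, hm⟩
    exact hnm.ne (Fin.ext (h n m (by simp [hn]) (by simp [hm])))

theorem _root_.Finset.sum_image_lt_of_pos {α β : Type*} [DecidableEq α] [DecidableEq β]
    {s : Finset α} {f : α → β} {w : β → ℕ} (hw : ∀ y, 0 < w y) {x₁ x₂ : α} (h₁ : x₁ ∈ s)
    (h₂ : x₂ ∈ s) (hne : x₁ ≠ x₂) (hf : f x₁ = f x₂) : ∑ y ∈ s.image f, w y < ∑ x ∈ s, w (f x) := by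
  have himage : s.image f = (s.erase x₁).image f := by
    refine (Finset.image_subset_image (Finset.erase_subset _ _)).antisymm' fun y hy => ?_
    obtain ⟨x, hx, rfl⟩ := Finset.mem_image.1 hy
    by_cases hx₁ : x = x₁
    · exact Finset.mem_image.2 ⟨x₂, Finset.mem_erase.2 ⟨hne.symm, h₂⟩, hx₁ ▸ hf.symm⟩
    · exact Finset.mem_image_of_mem f (Finset.mem_erase.2 ⟨hx₁, hx⟩)
  calc ∑ y ∈ s.image f, w y
      ≤ ∑ x ∈ s.erase x₁, w (f x) :=
        himage ▸ Finset.sum_image_le_of_nonneg fun _ _ => Nat.zero_le _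
    _ < w (f x₁) + ∑ x ∈ s.erase x₁, w (f x) := Nat.lt_add_of_pos_left (hw _)
    _ = ∑ x ∈ s, w (f x) := Finset.add_sum_erase s (fun x => w (f x)) h₁

theorem Atom.subst_subst (a : Atom) (f g : Term → Term) :
    (a.subst f).subst g = a.subst (fun t => g (f t)) := by
  simp [Atom.subst, Function.comp_def]

theorem Atom.subst_congr {a : Atom} {f g : Term → Term}
    (h : ∀ t ∈ a.args, f t = g t) : a.subst f = a.subst g := by
  simp only [Atom.subst, Atom.mk.injEq, true_and]
  exact List.map_congr_left h

theorem Atom.getElem?_subst (a : Atom) (f : Term → Term) (i : ℕ) :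
    (a.subst f).args[i]? = (a.args[i]?).map f := by
  simp [Atom.subst]

theorem Atom.mem_vars {a : Atom} {v : ℕ} : v ∈ a.vars ↔ Term.var v ∈ a.args := by
  simp only [Atom.vars, List.mem_toFinset, List.mem_filterMap]
  constructor
  · rintro ⟨t, ht, h⟩
    cases t <;> simp_all
  · exact fun h => ⟨Term.var v, h, rfl⟩

theorem mem_varsOfSet {S : Finset Atom} {v : ℕ} :
    v ∈ varsOfSet S ↔ ∃ a ∈ S, Term.var v ∈ a.args := by
  simp [varsOfSet, Finset.mem_sup, Atom.mem_vars]

theorem Atom.subst_subst_of_comp {γ δ u : Term → Term} (hδ : ∀ t, u t = δ (γ t)) (b : Atom) :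
    (b.subst γ).subst δ = b.subst u := by
  rw [Atom.subst_subst]
  exact Atom.subst_congr fun t _ => (hδ t).symm

theorem IsDatabase.not_mem_of_null_mem {R : Schema} {D : Finset Atom} (hD : IsDatabase R D)
    {a : Atom} {n : ℕ} (h : Term.null n ∈ a.args) : a ∉ D := fun ha => by
  obtain ⟨c, hc⟩ := (hD a ha).2 _ h
  cases hc

theorem TGD.not_mem_exVars_of_mem_body {σ : TGD} {b : Atom} (hb : b ∈ σ.body) {v : ℕ}
    (hv : Term.var v ∈ b.args) : v ∉ σ.exVars :=
  fun hex => (Finset.mem_sdiff.1 hex).2 (mem_varsOfSet.2 ⟨b, hb, hv⟩)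

theorem TGD.mem_frontier_of_not_mem_exVars {σ : TGD} {v : ℕ} (hv : Term.var v ∈ σ.head.args)
    (hex : v ∉ σ.exVars) : v ∈ σ.frontier := by
  simp_all [TGD.exVars, TGD.frontier, Atom.mem_vars]

theorem TGD.NormalForm.exPos_unique {σ : TGD} (hnf : σ.NormalForm) {i j : ℕ}
    (hi : σ.exPos i) (hj : σ.exPos j) : i = j := by
  obtain ⟨z, hz, hzi⟩ := hi
  obtain ⟨z', hz', hzj⟩ := hj
  obtain rfl : z = z' := Finset.card_le_one.1 hnf.1 _ hz _ hz'
  exact List.count_le_one_iff_getElem?.1 (hnf.2 z hz).le i j hzi hzj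

section MGU

variable {U : Finset Atom}

def SamePos (U : Finset Atom) (t t' : Term) : Prop :=
  ∃ a ∈ U, ∃ b ∈ U, ∃ i : ℕ, a.args[i]? = some t ∧ b.args[i]? = some t'

theorem IsUnifier.eq_of_samePos {u : Term → Term} (hu : IsUnifier u U) {t t' : Term}
    (h : SamePos U t t') : u t = u t' := by
  obtain ⟨a, ha, b, hb, i, hat, hbt⟩ := h
  have h1 := congrArg (fun c : Atom => c.args[i]?) (hu.2 a ha b hb)
  simpa [Atom.getElem?_subst, hat, hbt] using h1

theorem IsUnifier.eq_of_eqvGen {u : Term → Term} (hu : IsUnifier u U) {t t' : Term}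
    (h : Relation.EqvGen (SamePos U) t t') : u t = u t' := by
  induction h with
  | rel _ _ h => exact hu.eq_of_samePos h
  | refl => rfl
  | symm _ _ _ ih => exact ih.symm
  | trans _ _ _ _ _ ih1 ih2 => exact ih1.trans ih2

theorem eq_of_eqvGen_samePos_of_not_mem {t t' : Term} (h : Relation.EqvGen (SamePos U) t t')
    (ht : ∀ a ∈ U, t ∉ a.args) : t' = t := by
  have key : t = t' ∨ ((∃ a ∈ U, t ∈ a.args) ∧ ∃ a ∈ U, t' ∈ a.args) := by
    clear ht
    induction h with
    | rel _ _ h =>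
      obtain ⟨a, ha, b, hb, i, hat, hbt⟩ := h
      exact .inr ⟨⟨a, ha, List.mem_of_getElem? hat⟩, ⟨b, hb, List.mem_of_getElem? hbt⟩⟩
    | refl => exact .inl rfl
    | symm _ _ _ ih => exact ih.imp Eq.symm And.symm
    | trans _ _ _ _ _ ih1 ih2 =>
      rcases ih1 with rfl | ⟨h1, h1'⟩
      · exact ih2
      · rcases ih2 with rfl | ⟨-, h2'⟩
        · exact .inr ⟨h1, h1'⟩
        · exact .inr ⟨h1, h2'⟩
  rcases key with rfl | ⟨⟨a, ha, hta⟩, -⟩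
  · rfl
  · exact absurd hta (ht a ha)

open Classical in
/-- A representative of a class of terms that every unifier of `U` identifies. Unifiers fix
constants, so a constant in the class must be the representative. -/
noncomputable def canonicalTerm (U : Finset Atom) (C : Quot (SamePos U)) : Term :=
  if hc : ∃ c, Quot.mk _ (Term.const c) = C then .const hc.choose else C.out

noncomputable def mguOf (U : Finset Atom) (t : Term) : Term :=
  canonicalTerm U (Quot.mk _ t)

theorem eqvGen_mguOf (t : Term) : Relation.EqvGen (SamePos U) (mguOf U t) t := by
  unfold mguOf canonicalTerm
  split_ifs with hc
  · exact Quot.eqvGen_exact hc.choose_spec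
  · exact Quot.eqvGen_exact (Quot.out_eq _)

theorem exists_mgu (hU : Unifies U) :
    ∃ γ : Term → Term, IsMGU γ U ∧ IdOutside (varsOfSet U) γ := by
  obtain ⟨u, hu⟩ := hU
  have hcongr : ∀ {t t'}, SamePos U t t' → mguOf U t = mguOf U t' := fun h =>
    congrArg (canonicalTerm U) (Quot.sound h)
  refine ⟨mguOf U, ⟨⟨fun c => ?_, fun a ha b hb => ?_⟩, fun u' hu' => ⟨u', fun t => ?_⟩⟩,
    fun v hv => ?_⟩
  · have hc : ∃ c', Quot.mk (SamePos U) (Term.const c') = Quot.mk _ (Term.const c) := ⟨c, rfl⟩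
    have h := hu.eq_of_eqvGen (Quot.eqvGen_exact hc.choose_spec)
    rw [hu.1, hu.1] at h
    simp only [mguOf, canonicalTerm, dif_pos hc, h]
  · have hab := hu.2 a ha b hb
    simp only [Atom.subst, Atom.mk.injEq] at hab ⊢
    refine ⟨hab.1, List.ext_getElem? fun i => ?_⟩
    have hlen := congrArg List.length hab.2
    simp only [List.length_map] at hlen
    rw [List.getElem?_map, List.getElem?_map]
    rcases h1 : a.args[i]? with _ | t <;> rcases h2 : b.args[i]? with _ | t'
    · rfl
    · obtain ⟨hi, -⟩ := List.getElem?_eq_some_iff.1 h2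
      rw [List.getElem?_eq_none_iff] at h1; omega
    · obtain ⟨hi, -⟩ := List.getElem?_eq_some_iff.1 h1
      rw [List.getElem?_eq_none_iff] at h2; omega
    · exact congrArg some (hcongr ⟨a, ha, b, hb, i, h1, h2⟩)
  · exact (hu'.eq_of_eqvGen (eqvGen_mguOf t)).symm
  · refine eq_of_eqvGen_samePos_of_not_mem (Relation.EqvGen.symm _ _ (eqvGen_mguOf _)) ?_
    exact fun a ha hmem => hv (mem_varsOfSet.2 ⟨a, ha, hmem⟩)

end MGU

theorem renT_eq_var {ρ : ℕ → ℕ} {t : Term} {v : ℕ} :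
    renT ρ t = .var v ↔ ∃ w, t = .var w ∧ ρ w = v := by
  cases t <;> simp [renT]

theorem Atom.vars_subst_renT (a : Atom) (ρ : ℕ → ℕ) :
    (a.subst (renT ρ)).vars = a.vars.image ρ := by
  ext v
  simp only [Atom.mem_vars, Finset.mem_image, Atom.subst, List.mem_map, renT_eq_var]
  constructor
  · rintro ⟨t, ht, w, rfl, rfl⟩
    exact ⟨w, ht, rfl⟩
  · rintro ⟨w, hw, rfl⟩
    exact ⟨_, hw, w, rfl, rfl⟩

theorem varsOfSet_image_renT (s : Finset Atom) (ρ : ℕ → ℕ) :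
    varsOfSet (s.image (Atom.subst (renT ρ))) = (varsOfSet s).image ρ := by
  ext v
  simp only [mem_varsOfSet, Finset.mem_image, ← Atom.mem_vars]
  constructor
  · rintro ⟨_, ⟨a, ha, rfl⟩, hv⟩
    rw [Atom.vars_subst_renT, Finset.mem_image] at hv
    obtain ⟨w, hw, rfl⟩ := hv
    exact ⟨w, ⟨a, ha, hw⟩, rfl⟩
  · rintro ⟨w, ⟨a, ha, hw⟩, rfl⟩
    exact ⟨_, ⟨a, ha, rfl⟩, by simpa [Atom.vars_subst_renT] using ⟨w, hw, rfl⟩⟩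

theorem TGD.exVars_rename (σ : TGD) {ρ : ℕ → ℕ} (hρ : Function.Injective ρ) :
    (σ.rename ρ).exVars = σ.exVars.image ρ := by
  simp only [TGD.exVars, TGD.rename, Atom.vars_subst_renT, varsOfSet_image_renT]
  exact (Finset.image_sdiff _ _ hρ).symm

theorem TGD.exPos_of_exPos_rename {σ : TGD} {ρ : ℕ → ℕ} (hρ : Function.Injective ρ) {i : ℕ}
    (h : (σ.rename ρ).exPos i) : σ.exPos i := by
  obtain ⟨z, hz, hi⟩ := h
  rw [TGD.exVars_rename σ hρ] at hz
  obtain ⟨w, hw, rfl⟩ := Finset.mem_image.1 hz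
  simp only [TGD.rename, Atom.getElem?_subst, Option.map_eq_some_iff, renT_eq_var] at hi
  obtain ⟨_, hi, w', rfl, hw'⟩ := hi
  exact ⟨w, hw, hρ hw' ▸ hi⟩

def shiftGlue (N : ℕ) (g h : Term → Term) : Term → Term
  | .var w => if N ≤ w then h (.var (w - N)) else g (.var w)
  | t => g t

theorem Atom.subst_shiftGlue_of_vars_lt {a : Atom} {N : ℕ} (g h : Term → Term)
    (ha : ∀ w ∈ a.vars, w < N) : a.subst (shiftGlue N g h) = a.subst g := by
  refine Atom.subst_congr fun t ht => ?_
  cases t with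
  | var w => simp [shiftGlue, ha w (Atom.mem_vars.2 ht)]
  | _ => rfl

theorem Atom.subst_renT_shiftGlue {a : Atom} (N : ℕ) {g h : Term → Term} (hg : constFix g)
    (hh : constFix h) (ha : ∀ t ∈ a.args, t.noNull) :
    (a.subst (renT (· + N))).subst (shiftGlue N g h) = a.subst h := by
  rw [Atom.subst_subst]
  refine Atom.subst_congr fun t ht => ?_
  cases t with
  | const c => exact (hg c).trans (hh c).symm
  | null n => exact absurd (ha _ ht) id
  | var w => simp [renT, shiftGlue]

instance : Encodable Term :=
  Encodable.ofEquiv (ℕ ⊕ ℕ ⊕ ℕ)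
    { toFun := fun | .const n => .inl n | .null n => .inr (.inl n) | .var n => .inr (.inr n)
      invFun := fun | .inl n => .const n | .inr (.inl n) => .null n | .inr (.inr n) => .var n
      left_inv := fun t => by cases t <;> rfl
      right_inv := fun s => by rcases s with _ | _ | _ <;> rfl }

instance : Encodable Atom :=
  Encodable.ofEquiv (ℕ × List Term)
    ⟨fun a => (a.pred, a.args), fun p => ⟨p.1, p.2⟩, fun _ => rfl, fun _ => rfl⟩

instance : Encodable TGD :=
  Encodable.ofEquiv (Finset Atom × Atom)
    ⟨fun σ => (σ.body, σ.head), fun p => ⟨p.1, p.2⟩, fun _ => rfl, fun _ => rfl⟩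

/-- The null invented when `σ` fires with `h`. It is a Skolem term in `σ` and the frontier values
of `h`, so different triggers invent different nulls. -/
noncomputable def skolemNull (σ : TGD) (h : Term → Term) : Term :=
  .null (Encodable.encode (σ, (σ.frontier.sort (· ≤ ·)).map fun v => h (.var v)))

noncomputable def skolemExt (σ : TGD) (h : Term → Term) : Term → Term
  | .var v => if v ∈ σ.exVars then skolemNull σ h else h (.var v)
  | t => h t

theorem skolemNull_inj {σ σ' : TGD} {h h' : Term → Term}
    (e : skolemNull σ h = skolemNull σ' h') :
    σ = σ' ∧ ∀ v ∈ σ.frontier, h (.var v) = h' (.var v) := by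
  obtain ⟨rfl, hmap⟩ := Prod.mk.inj (Encodable.encode_injective (Term.null.inj e))
  exact ⟨rfl, fun v hv => List.map_eq_map_iff.1 hmap v ((Finset.mem_sort _).2 hv)⟩

theorem skolemExt_var_of_not_mem {σ : TGD} (h : Term → Term) {v : ℕ} (hv : v ∉ σ.exVars) :
    skolemExt σ h (.var v) = h (.var v) := by
  simp [skolemExt, hv]

theorem constFix_skolemExt (σ : TGD) {h : Term → Term} (hh : constFix h) :
    constFix (skolemExt σ h) := hh

theorem Atom.subst_skolemExt_of_mem_body {σ : TGD} (h : Term → Term) {b : Atom}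
    (hb : b ∈ σ.body) : b.subst (skolemExt σ h) = b.subst h := by
  refine Atom.subst_congr fun t ht => ?_
  cases t with
  | var v => exact skolemExt_var_of_not_mem h (TGD.not_mem_exVars_of_mem_body hb ht)
  | _ => rfl

section Chase

variable {R : Schema} {D : Finset Atom} {Sig : Finset TGD}

def chaseStage (D : Finset Atom) (Sig : Finset TGD) : ℕ → Set Atom
  | 0 => ↑D
  | k + 1 => chaseStage D Sig k ∪ {a | ∃ σ ∈ Sig, ∃ h, constFix h ∧
      (∀ b ∈ σ.body, b.subst h ∈ chaseStage D Sig k) ∧ σ.head.subst (skolemExt σ h) = a}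

def chase (D : Finset Atom) (Sig : Finset TGD) : Set Atom := ⋃ k, chaseStage D Sig k

/-- The first stage containing `a` (junk value `0` for atoms outside the chase). -/
noncomputable def chaseDepth (D : Finset Atom) (Sig : Finset TGD) (a : Atom) : ℕ :=
  sInf {k | a ∈ chaseStage D Sig k}

theorem chaseStage_mono : Monotone (chaseStage D Sig) :=
  monotone_nat_of_le_succ fun _ => Set.subset_union_left

theorem subset_chase : ↑D ⊆ chase D Sig :=
  Set.subset_iUnion (chaseStage D Sig) 0

theorem mem_chaseStage_chaseDepth {a : Atom} (h : a ∈ chase D Sig) :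
    a ∈ chaseStage D Sig (chaseDepth D Sig a) :=
  Nat.sInf_mem (Set.mem_iUnion.1 h)

theorem chaseDepth_le {a : Atom} {k : ℕ} (h : a ∈ chaseStage D Sig k) : chaseDepth D Sig a ≤ k :=
  Nat.sInf_le h

theorem satSet_chase : satSet Sig (chase D Sig) := by
  intro σ hσ h ⟨hcf, hbody⟩
  set K := σ.body.sup fun b => chaseDepth D Sig (b.subst h)
  have hK : ∀ b ∈ σ.body, b.subst h ∈ chaseStage D Sig K := fun b hb =>
    chaseStage_mono (Finset.le_sup (f := fun b => chaseDepth D Sig (b.subst h)) hb)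
      (mem_chaseStage_chaseDepth (hbody b hb))
  refine ⟨skolemExt σ h, hcf, fun v hv => skolemExt_var_of_not_mem h ?_, ?_⟩
  · exact fun hex => (Finset.mem_sdiff.1 hex).2 (Finset.mem_inter.1 hv).1
  · exact Set.mem_iUnion.2 ⟨K + 1, .inr ⟨σ, hσ, h, hcf, hK, rfl⟩⟩

structure CreatedBy (D : Finset Atom) (Sig : Finset TGD) (a : Atom) (σ : TGD)
    (h : Term → Term) (k : ℕ) : Prop where
  mem : σ ∈ Sig
  map_const : constFix h
  body_mem : ∀ b ∈ σ.body, b.subst h ∈ chaseStage D Sig k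
  head_eq : σ.head.subst (skolemExt σ h) = a
  depth_eq : chaseDepth D Sig a = k + 1

theorem exists_createdBy {a : Atom} (ha : a ∈ chase D Sig) (haD : a ∉ D) :
    ∃ σ h k, CreatedBy D Sig a σ h k := by
  have hmem := mem_chaseStage_chaseDepth ha
  obtain ⟨k, hk⟩ : ∃ k, chaseDepth D Sig a = k + 1 :=
    Nat.exists_eq_succ_of_ne_zero fun h0 => haD (by rw [h0] at hmem; exact hmem)
  rw [hk] at hmem
  rcases hmem with hlow | ⟨σ, hσ, h, hcf, hbody, hhead⟩
  · exact absurd (chaseDepth_le hlow) (by omega)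
  · exact ⟨σ, h, k, hσ, hcf, hbody, hhead, hk⟩

theorem null_mem_chaseStage (hover : ∀ σ ∈ Sig, σ.overSchema R) (hD : IsDatabase R D)
    {σ : TGD} {h : Term → Term} (hh : constFix h) {k : ℕ} {c : Atom}
    (hc : c ∈ chaseStage D Sig k) (hz : skolemNull σ h ∈ c.args) :
    c = σ.head.subst (skolemExt σ h) ∨
      ∃ k' < k, ∃ c' ∈ chaseStage D Sig k', skolemNull σ h ∈ c'.args := by
  cases k with
  | zero => exact absurd hc (hD.not_mem_of_null_mem hz)
  | succ k =>
    rcases hc with hc | ⟨σ', hσ', h', hcf', hbody, rfl⟩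
    · exact .inr ⟨k, k.lt_succ_self, c, hc, hz⟩
    obtain ⟨t, ht, htz⟩ := List.mem_map.1 hz
    have hnoNull := (hover σ' hσ').2.2.2
    cases t with
    | const c => exact absurd ((hcf' c).symm.trans htz) (by simp [skolemNull])
    | null n => exact absurd (hnoNull _ ht) id
    | var v =>
      by_cases hv : v ∈ σ'.exVars
      · simp only [skolemExt, if_pos hv] at htz
        obtain ⟨rfl, hfr⟩ := skolemNull_inj htz.symm
        refine .inl (Atom.subst_congr fun s hs => ?_)
        cases s with
        | const c => exact (hcf' c).trans (hh c).symm
        | null n => exact absurd (hnoNull _ hs) id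
        | var w =>
          by_cases hw : w ∈ σ.exVars
          · simp [skolemExt, hw, htz]
          · simp [skolemExt, hw, hfr w (TGD.mem_frontier_of_not_mem_exVars hs hw)]
      · rw [skolemExt_var_of_not_mem h' hv] at htz
        obtain ⟨b, hb, hvb⟩ := mem_varsOfSet.1
          (Finset.mem_inter.1 (TGD.mem_frontier_of_not_mem_exVars ht hv)).1
        exact .inr ⟨k, k.lt_succ_self, b.subst h', hbody b hb, htz ▸ List.mem_map_of_mem hvb⟩

namespace CreatedBy

variable {a : Atom} {σ : TGD} {h : Term → Term} {k : ℕ}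

theorem eq_of_null_mem (hover : ∀ σ ∈ Sig, σ.overSchema R) (hD : IsDatabase R D)
    (ht : CreatedBy D Sig a σ h k) {j : ℕ} (hj : j ≤ k + 1) {c : Atom}
    (hc : c ∈ chaseStage D Sig j) (hz : skolemNull σ h ∈ c.args) : c = a := by
  induction j using Nat.strong_induction_on generalizing c with
  | _ j ih =>
    rcases null_mem_chaseStage hover hD ht.map_const hc hz with rfl | ⟨j', hj', c', hc', hz'⟩
    · exact ht.head_eq
    · obtain rfl := ih j' hj' (by omega) hc' hz'
      have := chaseDepth_le hc'
      rw [ht.depth_eq] at this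
      omega

theorem getElem?_of_exPos (ht : CreatedBy D Sig a σ h k) {i : ℕ} (hi : σ.exPos i) :
    a.args[i]? = some (skolemNull σ h) := by
  obtain ⟨z, hz, hzi⟩ := hi
  rw [← ht.head_eq, Atom.getElem?_subst, hzi]
  simp [skolemExt, hz]

theorem exPos_of_getElem? (hover : ∀ σ ∈ Sig, σ.overSchema R) (hD : IsDatabase R D)
    (ht : CreatedBy D Sig a σ h k) {i : ℕ} (hi : a.args[i]? = some (skolemNull σ h)) :
    σ.exPos i := by
  rw [← ht.head_eq, Atom.getElem?_subst, Option.map_eq_some_iff] at hi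
  obtain ⟨t, hti, htz⟩ := hi
  have htmem := List.mem_of_getElem? hti
  cases t with
  | const c => exact absurd ((ht.map_const c).symm.trans htz) (by simp [skolemNull])
  | null n => exact absurd ((hover σ ht.mem).2.2.2 _ htmem) id
  | var v =>
    by_cases hv : v ∈ σ.exVars
    · exact ⟨v, hv, hti⟩
    rw [skolemExt_var_of_not_mem h hv] at htz
    obtain ⟨b, hb, hvb⟩ := mem_varsOfSet.1
      (Finset.mem_inter.1 (TGD.mem_frontier_of_not_mem_exVars htmem hv)).1
    have hba := ht.eq_of_null_mem hover hD k.le_succ (ht.body_mem b hb)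
      (htz ▸ List.mem_map_of_mem hvb)
    have := chaseDepth_le (hba ▸ ht.body_mem b hb)
    rw [ht.depth_eq] at this
    omega

theorem eq_and_exPos (hover : ∀ σ ∈ Sig, σ.overSchema R) (hD : IsDatabase R D)
    (ht : CreatedBy D Sig a σ h k) {c : Atom} (hc : c ∈ chaseStage D Sig (k + 1)) {i : ℕ}
    (hi : c.args[i]? = some (skolemNull σ h)) : c = a ∧ σ.exPos i := by
  obtain rfl := ht.eq_of_null_mem hover hD le_rfl hc (List.mem_of_getElem? hi)
  exact ⟨rfl, ht.exPos_of_getElem? hover hD hi⟩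

end CreatedBy

end Chase

section Completeness

variable {R : Schema} {D : Finset Atom} {Sig : Finset TGD}

structure ChaseMatch (D : Finset Atom) (Sig : Finset TGD) (p : CQ) (g : Term → Term) : Prop where
  map_const : constFix g
  body_mem : ∀ b ∈ p.body, b.subst g ∈ chase D Sig
  head_const : ∀ s ∈ p.head.args, ∃ c, g s = .const c

theorem ChaseMatch.subst {p : CQ} {γ δ u : Term → Term} (hu : ChaseMatch D Sig p u)
    (hγ : constFix γ) (hδ : ∀ t, u t = δ (γ t)) : ChaseMatch D Sig (p.subst γ) δ where
  map_const c := by simpa [hγ c, hu.map_const c] using (hδ (.const c)).symm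
  body_mem := by
    simp only [CQ.subst, Finset.mem_image, forall_exists_index, and_imp, forall_apply_eq_imp_iff₂]
    exact fun b hb => Atom.subst_subst_of_comp hδ b ▸ hu.body_mem b hb
  head_const := by
    simp only [CQ.subst, Atom.subst, List.mem_map, forall_exists_index, and_imp,
      forall_apply_eq_imp_iff₂]
    exact fun s hs => hδ s ▸ hu.head_const s hs

theorem CQ.head_args_subst_map (p : CQ) {γ δ u : Term → Term} (hδ : ∀ t, u t = δ (γ t)) :
    (p.subst γ).head.args.map δ = p.head.args.map u := by
  simp only [CQ.subst, Atom.subst, List.map_map]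
  exact List.map_congr_left fun t _ => (hδ t).symm

def weightBase (Sig : Finset TGD) : ℕ := Sig.sup (fun σ => σ.body.card) + 1

/-- The termination measure: an atom of depth `k + 1` outweighs the at most `|body σ|` atoms of
depth at most `k` that a rewriting step with `σ` puts in its place. -/
noncomputable def chaseWeight (D : Finset Atom) (Sig : Finset TGD) (B : Finset Atom)
    (g : Term → Term) : ℕ :=
  ∑ b ∈ B, weightBase Sig ^ chaseDepth D Sig (b.subst g)

theorem chaseWeight_image_le {B : Finset Atom} {γ δ u : Term → Term}
    (hδ : ∀ t, u t = δ (γ t)) :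
    chaseWeight D Sig (B.image (Atom.subst γ)) δ ≤ chaseWeight D Sig B u := by
  unfold chaseWeight
  simp_rw [← Atom.subst_subst_of_comp hδ]
  exact Finset.sum_image_le_of_nonneg fun _ _ => Nat.zero_le _

theorem chaseWeight_image_lt {B : Finset Atom} {γ δ u : Term → Term}
    (hδ : ∀ t, u t = δ (γ t)) {b₁ b₂ : Atom} (h₁ : b₁ ∈ B) (h₂ : b₂ ∈ B) (hne : b₁ ≠ b₂)
    (hγ : b₁.subst γ = b₂.subst γ) :
    chaseWeight D Sig (B.image (Atom.subst γ)) δ < chaseWeight D Sig B u := by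
  unfold chaseWeight
  simp_rw [← Atom.subst_subst_of_comp hδ]
  exact Finset.sum_image_lt_of_pos (fun _ => pow_pos (Nat.succ_pos _) _) h₁ h₂ hne hγ

theorem chaseWeight_replace_lt {a : Atom} {σ : TGD} {h : Term → Term} {k : ℕ}
    (ht : CreatedBy D Sig a σ h k) {B S B' : Finset Atom} {g u : Term → Term} (hSB : S ⊆ B)
    {b₀ : Atom} (hb₀ : b₀ ∈ S) (hb₀a : b₀.subst g = a) (hcard : B'.card ≤ σ.body.card)
    (hB' : ∀ b ∈ B', b.subst u ∈ chaseStage D Sig k) (hu : ∀ b ∈ B \ S, b.subst u = b.subst g) :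
    chaseWeight D Sig ((B \ S) ∪ B') u < chaseWeight D Sig B g := by
  unfold chaseWeight
  set C := weightBase Sig
  have hC : 0 < C := Nat.succ_pos _
  have hσC : σ.body.card < C :=
    Nat.lt_succ_of_le (Finset.le_sup (f := fun σ : TGD => σ.body.card) ht.mem)
  have hB'C : ∑ b ∈ B', C ^ chaseDepth D Sig (b.subst u) ≤ B'.card * C ^ k := by
    refine Finset.sum_le_card_nsmul _ _ _ fun b hb => ?_
    exact Nat.pow_le_pow_right hC (chaseDepth_le (hB' b hb))
  have hSC : C ^ (k + 1) ≤ ∑ b ∈ S, C ^ chaseDepth D Sig (b.subst g) := by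
    rw [← ht.depth_eq, ← hb₀a]
    exact Finset.single_le_sum (f := fun b => C ^ chaseDepth D Sig (b.subst g))
      (fun _ _ => Nat.zero_le _) hb₀
  have hcardC : B'.card * C ^ k < C ^ (k + 1) := by
    rw [pow_succ']
    exact Nat.mul_lt_mul_of_pos_right (hcard.trans_lt hσC) (pow_pos hC k)
  have hunion := Finset.sum_union_inter (s₁ := B \ S) (s₂ := B')
    (f := fun b => C ^ chaseDepth D Sig (b.subst u))
  have hrest : ∑ b ∈ B \ S, C ^ chaseDepth D Sig (b.subst u) =
      ∑ b ∈ B \ S, C ^ chaseDepth D Sig (b.subst g) :=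
    Finset.sum_congr rfl fun b hb => by rw [hu b hb]
  have hsplit := Finset.sum_sdiff (f := fun b => C ^ chaseDepth D Sig (b.subst g)) hSB
  omega

theorem factorizable_filter_var_mem {p : CQ} {σ : TGD} {v : ℕ} (hnf : σ.NormalForm)
    (hsh : p.shared v) (hhead : Term.var v ∉ p.head.args)
    (hocc : ∀ b ∈ p.body, ∀ i : ℕ, b.args[i]? = some (.var v) → σ.exPos i)
    (hU : Unifies (p.body.filter fun b => Term.var v ∈ b.args)) :
    Factorizable p σ (p.body.filter fun b => Term.var v ∈ b.args) := by
  set SV := p.body.filter fun b => Term.var v ∈ b.args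
  have hcount : ∀ b ∈ SV, b.countVar v ≤ 1 := fun b hb =>
    List.count_le_one_iff_getElem?.2 fun i j hi hj =>
      hnf.exPos_unique (hocc b (Finset.mem_filter.1 hb).1 i hi)
        (hocc b (Finset.mem_filter.1 hb).1 j hj)
  have hcard : 2 ≤ SV.card := calc
    2 ≤ ∑ b ∈ p.body, b.countVar v := by
      simpa [CQ.shared, CQ.countVar, Atom.countVar, List.count_eq_zero.2 hhead] using hsh
    _ = ∑ b ∈ SV, b.countVar v :=
      (Finset.sum_filter_of_ne fun b _ hb => List.count_pos_iff.1 (Nat.pos_of_ne_zero hb)).symm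
    _ ≤ SV.card := by simpa using Finset.sum_le_card_nsmul SV _ 1 hcount
  obtain ⟨b, hb⟩ : SV.Nonempty := Finset.card_pos.1 (by omega)
  obtain ⟨hbp, hvb⟩ := Finset.mem_filter.1 hb
  obtain ⟨i, hi⟩ := List.mem_iff_getElem?.1 hvb
  refine ⟨Finset.filter_subset _ _, hcard, hU, ⟨i, hocc b hbp i hi⟩, v, ?_, fun b hb => ?_⟩
  · rw [mem_varsOfSet]
    rintro ⟨b, hb, hvb⟩
    exact (Finset.mem_sdiff.1 hb).2 (Finset.mem_filter.2 ⟨(Finset.mem_sdiff.1 hb).1, hvb⟩)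
  · obtain ⟨hbp, hvb⟩ := Finset.mem_filter.1 hb
    obtain ⟨i, hi⟩ := List.mem_iff_getElem?.1 hvb
    exact ⟨⟨i, hocc b hbp i hi, hi⟩, fun j hj => hocc b hbp j hj⟩

theorem exists_factStep (hD : IsDatabase R D) {p : CQ} {g : Term → Term}
    (hg : ChaseMatch D Sig p g) {σ : TGD} (hσ : σ ∈ Sig) (hnf : σ.NormalForm) {v n : ℕ}
    {a : Atom} (hsh : p.shared v) (hgv : g (.var v) = .null n)
    (hocc : ∀ b ∈ p.body, ∀ i : ℕ, b.args[i]? = some (.var v) → b.subst g = a ∧ σ.exPos i) :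
    ∃ p' g', IsFactStep Sig ∅ p p' ∧ ChaseMatch D Sig p' g' ∧
      p'.head.args.map g' = p.head.args.map g ∧
      chaseWeight D Sig p'.body g' < chaseWeight D Sig p.body g ∧
      ∃ b ∈ p'.body, b.subst g' ∉ D := by
  set SV := p.body.filter fun b => Term.var v ∈ b.args
  have hhead : Term.var v ∉ p.head.args := fun hv => by
    obtain ⟨c, hc⟩ := hg.head_const _ hv
    rw [hgv] at hc
    cases hc
  have hSV : ∀ b ∈ SV, b.subst g = a := fun b hb => by
    obtain ⟨hbp, hvb⟩ := Finset.mem_filter.1 hb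
    obtain ⟨i, hi⟩ := List.mem_iff_getElem?.1 hvb
    exact (hocc b hbp i hi).1
  have hU : IsUnifier g SV :=
    ⟨hg.map_const, fun b hb b' hb' => (hSV b hb).trans (hSV b' hb').symm⟩
  have hfact := factorizable_filter_var_mem hnf hsh hhead (fun b hb i hi => (hocc b hb i hi).2)
    ⟨g, hU⟩
  obtain ⟨γ, hγ, hid⟩ := exists_mgu ⟨g, hU⟩
  obtain ⟨δ, hδ⟩ := hγ.2 g hU
  obtain ⟨b₁, hb₁, b₂, hb₂, hne⟩ := Finset.one_lt_card.1 hfact.2.1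
  refine ⟨p.subst γ, δ, ⟨σ, hσ, SV, hfact, γ, hγ, hid, by simp [ProtectsVars], rfl⟩,
    hg.subst hγ.1.1 hδ, p.head_args_subst_map hδ,
    chaseWeight_image_lt hδ (hfact.1 hb₁) (hfact.1 hb₂) hne (hγ.1.2 b₁ hb₁ b₂ hb₂),
    b₁.subst γ, Finset.mem_image_of_mem _ (hfact.1 hb₁), ?_⟩
  rw [Atom.subst_subst_of_comp hδ]
  have hnull : Term.null n ∈ (b₁.subst g).args :=
    hgv ▸ List.mem_map_of_mem (f := g) (Finset.mem_filter.1 hb₁).2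
  exact hD.not_mem_of_null_mem hnull

theorem applicable_rename {p : CQ} {σ : TGD} {ρ : ℕ → ℕ} (hρ : Function.Injective ρ)
    {S : Finset Atom} (hS : S.Nonempty) (hSp : S ⊆ p.body)
    (hU : Unifies (S ∪ {(σ.rename ρ).head})) {g : Term → Term} (hg : constFix g) {n : ℕ}
    (hpos : ∀ b ∈ S, ∀ i : ℕ, σ.exPos i → (b.args[i]?).map g = some (.null n))
    (hfree : ∀ v, p.shared v → g (.var v) ≠ .null n) : Applicable p (σ.rename ρ) S := by
  refine ⟨hS, hSp, hU, fun b hb i hi => ⟨fun c hc => ?_, fun v hv hsh => ?_⟩⟩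
  · have := hpos b hb i (TGD.exPos_of_exPos_rename hρ hi)
    rw [hc, Option.map_some, hg c] at this
    cases this
  · have := hpos b hb i (TGD.exPos_of_exPos_rename hρ hi)
    rw [hv, Option.map_some, Option.some.injEq] at this
    exact hfree v hsh this

theorem CreatedBy.subst_rename_shiftGlue (hover : ∀ σ ∈ Sig, σ.overSchema R) {a : Atom}
    {σ : TGD} {h : Term → Term} {k : ℕ} (ht : CreatedBy D Sig a σ h k) {g : Term → Term}
    (hg : constFix g) (N : ℕ) :
    (σ.rename (· + N)).head.subst (shiftGlue N g (skolemExt σ h)) = a ∧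
      ∀ b ∈ (σ.rename (· + N)).body,
        b.subst (shiftGlue N g (skolemExt σ h)) ∈ chaseStage D Sig k := by
  have hσ := hover σ ht.mem
  have hext := constFix_skolemExt σ ht.map_const
  refine ⟨(Atom.subst_renT_shiftGlue N hg hext hσ.2.2.2).trans ht.head_eq, ?_⟩
  simp only [TGD.rename, Finset.mem_image, forall_exists_index, and_imp,
    forall_apply_eq_imp_iff₂]
  intro b hb
  rw [Atom.subst_renT_shiftGlue N hg hext (hσ.2.1 b hb).2, Atom.subst_skolemExt_of_mem_body h hb]
  exact ht.body_mem b hb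

theorem exists_rewriteStep_of_unifier {p : CQ} {σ : TGD} (hσ : σ ∈ Sig) {ρ : ℕ → ℕ}
    (hρ : Function.Injective ρ) (hfresh : ∀ v, ρ v ∉ p.vars) {S : Finset Atom}
    (happ : Applicable p (σ.rename ρ) S) {u : Term → Term}
    (hU : IsUnifier u (S ∪ {(σ.rename ρ).head}))
    (hP : ChaseMatch D Sig ⟨p.head, (p.body \ S) ∪ (σ.rename ρ).body⟩ u) :
    ∃ p' g', IsRewriteStep Sig ∅ p p' ∧ ChaseMatch D Sig p' g' ∧
      p'.head.args.map g' = p.head.args.map u ∧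
      chaseWeight D Sig p'.body g' ≤ chaseWeight D Sig ((p.body \ S) ∪ (σ.rename ρ).body) u := by
  obtain ⟨γ, hγ, hid⟩ := exists_mgu ⟨u, hU⟩
  obtain ⟨δ, hδ⟩ := hγ.2 u hU
  exact ⟨_, δ, ⟨σ, hσ, ρ, hρ, hfresh, S, happ, γ, hγ, hid, by simp [ProtectsVars], rfl⟩,
    hP.subst hγ.1.1 hδ, CQ.head_args_subst_map _ hδ, chaseWeight_image_le hδ⟩

theorem exists_rewriteStep (hover : ∀ σ ∈ Sig, σ.overSchema R) {p : CQ} {g : Term → Term}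
    (hg : ChaseMatch D Sig p g) {a : Atom} {σ : TGD} {h : Term → Term} {k : ℕ}
    (ht : CreatedBy D Sig a σ h k) {b₀ : Atom} (hb₀ : b₀ ∈ p.body) (hb₀a : b₀.subst g = a)
    (hfree : ∀ v, p.shared v → g (.var v) ≠ skolemNull σ h) :
    ∃ p' g', IsRewriteStep Sig ∅ p p' ∧ ChaseMatch D Sig p' g' ∧
      p'.head.args.map g' = p.head.args.map g ∧
      chaseWeight D Sig p'.body g' < chaseWeight D Sig p.body g := by
  set S := p.body.filter fun b => b.subst g = a
  have hSp : S ⊆ p.body := Finset.filter_subset _ _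
  have hb₀S : b₀ ∈ S := Finset.mem_filter.2 ⟨hb₀, hb₀a⟩
  set N := p.vars.sup id + 1
  have hN : ∀ w ∈ p.vars, w < N := fun w hw => Nat.lt_succ_of_le (Finset.le_sup (f := id) hw)
  have hρ : Function.Injective (· + N) := add_left_injective N
  -- `σ` is renamed apart from `p`, so `g` and the trigger glue into a single unifier.
  set u := shiftGlue N g (skolemExt σ h)
  obtain ⟨hu_head', hu_body'⟩ := ht.subst_rename_shiftGlue hover hg.map_const N
  have hu_body : ∀ b ∈ p.body, b.subst u = b.subst g := fun b hb =>
    Atom.subst_shiftGlue_of_vars_lt _ _ fun w hw =>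
      hN w (Finset.mem_union_right _ (mem_varsOfSet.2 ⟨b, hb, Atom.mem_vars.1 hw⟩))
  have hu_head : p.head.subst u = p.head.subst g :=
    Atom.subst_shiftGlue_of_vars_lt _ _ fun w hw => hN w (Finset.mem_union_left _ hw)
  have hU : IsUnifier u (S ∪ {(σ.rename (· + N)).head}) := by
    have hto : ∀ b ∈ S ∪ {(σ.rename (· + N)).head}, b.subst u = a := by
      simp only [Finset.mem_union, Finset.mem_singleton]
      rintro b (hb | rfl)
      exacts [(hu_body b (hSp hb)).trans (Finset.mem_filter.1 hb).2, hu_head']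
    exact ⟨fun c => hg.map_const c, fun b hb b' hb' => (hto b hb).trans (hto b' hb').symm⟩
  have happ := applicable_rename hρ ⟨b₀, hb₀S⟩ hSp ⟨u, hU⟩ hg.map_const
    (fun b hb i hi => by
      rw [← Atom.getElem?_subst, (Finset.mem_filter.1 hb).2, ht.getElem?_of_exPos hi]; rfl)
    hfree
  have hP : ChaseMatch D Sig ⟨p.head, (p.body \ S) ∪ (σ.rename (· + N)).body⟩ u := by
    refine ⟨fun c => hg.map_const c, fun b hb => ?_, fun s hs => ?_⟩
    · rcases Finset.mem_union.1 hb with hb | hb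
      · rw [hu_body b (Finset.mem_sdiff.1 hb).1]
        exact hg.body_mem b (Finset.mem_sdiff.1 hb).1
      · exact Set.mem_iUnion.2 ⟨k, hu_body' b hb⟩
    · have hus : u s = g s := List.map_eq_map_iff.1 (congrArg Atom.args hu_head) s hs
      exact hus ▸ hg.head_const s hs
  obtain ⟨p', g', hstep, hm, hhead, hle⟩ := exists_rewriteStep_of_unifier ht.mem hρ
    (fun v hv => by have := hN _ hv; omega) happ hU hP
  refine ⟨p', g', hstep, hm, hhead.trans (congrArg Atom.args hu_head), hle.trans_lt ?_⟩
  exact chaseWeight_replace_lt ht hSp hb₀S hb₀a Finset.card_image_le hu_body'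
    fun b hb => hu_body b (Finset.mem_sdiff.1 hb).1

theorem exists_step (hover : ∀ σ ∈ Sig, σ.overSchema R) (hD : IsDatabase R D)
    (hnf : ∀ σ ∈ Sig, σ.NormalForm) {p : CQ} {g : Term → Term} (hg : ChaseMatch D Sig p g)
    (hpD : ∃ b ∈ p.body, b.subst g ∉ D) :
    ∃ p' g', ChaseMatch D Sig p' g' ∧ p'.head.args.map g' = p.head.args.map g ∧
      chaseWeight D Sig p'.body g' < chaseWeight D Sig p.body g ∧
      (IsRewriteStep Sig ∅ p p' ∨ IsFactStep Sig ∅ p p' ∧ ∃ b ∈ p'.body, b.subst g' ∉ D) := by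
  obtain ⟨b₁, hb₁, hb₁D⟩ := hpD
  obtain ⟨b₀, hb₀, hmax⟩ :=
    Finset.exists_max_image p.body (fun b => chaseDepth D Sig (b.subst g)) ⟨b₁, hb₁⟩
  have hb₀D : b₀.subst g ∉ D := fun h₀ => by
    have h₁ := mem_chaseStage_chaseDepth (hg.body_mem b₁ hb₁)
    rw [Nat.le_zero.1 ((hmax b₁ hb₁).trans (chaseDepth_le (k := 0) h₀))] at h₁
    exact hb₁D h₁
  obtain ⟨σ, h, k, ht⟩ := exists_createdBy (hg.body_mem b₀ hb₀) hb₀D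
  by_cases hsh : ∃ v, p.shared v ∧ g (.var v) = skolemNull σ h
  · obtain ⟨v, hv, hgv⟩ := hsh
    have hocc : ∀ b ∈ p.body, ∀ i : ℕ, b.args[i]? = some (.var v) →
        b.subst g = b₀.subst g ∧ σ.exPos i := fun b hb i hi =>
      ht.eq_and_exPos hover hD
        (chaseStage_mono (ht.depth_eq ▸ hmax b hb) (mem_chaseStage_chaseDepth (hg.body_mem b hb)))
        (by rw [Atom.getElem?_subst, hi, Option.map_some, hgv])
    obtain ⟨p', g', hstep, hm, hhead, hlt, hnD⟩ :=
      exists_factStep hD hg ht.mem (hnf σ ht.mem) hv hgv hocc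
    exact ⟨p', g', hm, hhead, hlt, .inr ⟨hstep, hnD⟩⟩
  · push Not at hsh
    obtain ⟨p', g', hstep, hm, hhead, hlt⟩ := exists_rewriteStep hover hg ht hb₀ rfl hsh
    exact ⟨p', g', hm, hhead, hlt, .inl hstep⟩

/-- The disjunction in `hp` is the invariant: a factorization step may leave `q_Σ`, but its
result still has an atom outside `D`, so a rewriting step follows. -/
theorem exists_database_match (hover : ∀ σ ∈ Sig, σ.overSchema R) (hD : IsDatabase R D)
    (hnf : ∀ σ ∈ Sig, σ.NormalForm) {q p : CQ} {g : Term → Term} (hreach : Reach Sig ∅ q p)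
    (hg : ChaseMatch D Sig p g) (hp : p ∈ XRewriteOut Sig ∅ q ∨ ∃ b ∈ p.body, b.subst g ∉ D) :
    ∃ p' ∈ XRewriteOut Sig ∅ q, ∃ g', IsHom g' ↑p'.body ↑D ∧
      p'.head.args.map g' = p.head.args.map g := by
  induction hw : chaseWeight D Sig p.body g using Nat.strong_induction_on generalizing p g with
  | _ n ih =>
    by_cases hpD : ∃ b ∈ p.body, b.subst g ∉ D
    · obtain ⟨p', g', hm, hhead, hlt, hstep⟩ := exists_step hover hD hnf hg hpD
      rw [← hhead]
      rcases hstep with hrw | ⟨hfact, hnD⟩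
      · exact ih _ (hw ▸ hlt) (hreach.rw hrw) hm (.inl (.inr ⟨p, hreach, hrw⟩)) rfl
      · exact ih _ (hw ▸ hlt) (hreach.fact hfact) hm (.inr hnD) rfl
    · push Not at hpD
      exact ⟨p, hp.resolve_right (by simpa using hpD), g, ⟨hg.map_const, hpD⟩, rfl⟩

end Completeness

theorem xrewrite_complete_general
    (R : Schema) (Sig : Finset TGD) (q : CQ)
    (hover : ∀ σ ∈ Sig, σ.overSchema R) (hnf : ∀ σ ∈ Sig, σ.NormalForm)
    (D : Finset Atom) (hD : IsDatabase R D) :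
    certAnsUCQ (XRewriteOut Sig ∅ q) D Sig ⊆ ucqEval (XRewriteOut Sig ∅ q) ↑D := by
  intro t ht
  obtain ⟨p, hp, hct, g, ⟨hcf, hbody⟩, rfl⟩ :
      ∃ p ∈ XRewriteOut Sig ∅ q, t ∈ p.eval (chase D Sig) := by
    simpa [ucqEval] using ht (chase D Sig) subset_chase satSet_chase
  have hreach : Reach Sig ∅ q p := by
    rcases hp with rfl | ⟨p₀, hp₀, hstep⟩
    exacts [.refl, .rw hp₀ hstep]
  have hg : ChaseMatch D Sig p g := ⟨hcf, hbody, fun s hs => hct _ (List.mem_map_of_mem hs)⟩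
  obtain ⟨p', hp', g', hhom, hhead⟩ := exists_database_match hover hD hnf hreach hg (.inl hp)
  exact Set.mem_biUnion hp' ⟨hct, g', hhom, hhead⟩

/-- completeness: the certain answers of the rewriting q_Σ are
contained in the evaluation of q_Σ directly over the database D. -/
theorem xrewrite_complete
    (R : Schema) (Sig : Finset TGD) (q : CQ)
    (hq : q.overSchema R)
    (hover : ∀ σ ∈ Sig, σ.overSchema R) (hnf : ∀ σ ∈ Sig, σ.NormalForm)
    (D : Finset Atom) (hD : IsDatabase R D) :
    certAnsUCQ (XRewriteOut Sig ∅ q) D Sig ⊆ ucqEval (XRewriteOut Sig ∅ q) ↑D :=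
  xrewrite_complete_general R Sig q hover hnf D hD

end OntDB
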